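/- Let A be a negative definite self-adjoint operator on a finite-dimensional inner product space V (e.g., a discrete Laplacian Δ_h on a finite element space). For g ∈ L²(0,T;V), set y(t) := ∫_t^T e^{(s−t)A} g(s) ds. Then (∫₀^T ‖(−A)^{1/2} y(t)‖² dt)^{1/2} ≤ (∫₀^T ‖(−A)^{−1/2} g(t)‖² dt)^{1/2}. -/

import Mathlib

/-!
Diagonalise `B` in an orthonormal eigenbasis `b i` with eigenvalues `μ i`, so that
`-A = B ^ 2` has eigenvalues `λ = μ i ^ 2 > 0`. The `i`-th coordinate of `y` is then the scalar
convolution `c t = ∫_t^T e^{λ (t - s)} G s ds` of the coordinate `G` of `g`, and the claim splits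
into the scalar inequalities `λ ∫ c² ≤ λ⁻¹ ∫ G²`. These are the Schur test: the kernel
`e^{λ (t - s)} 1_{t < s}` has all row and column integrals at most `λ⁻¹`, so by Cauchy–Schwarz
and Fubini the integral operator it defines has norm at most `λ⁻¹` on `L²`.
-/

open MeasureTheory Set

section SchurTest

variable {α β : Type*} [MeasurableSpace α] [MeasurableSpace β] {μ : Measure α} {ν : Measure β}

theorem sq_integral_mul_le_integral_mul_integral_mul_sq {w G : β → ℝ} (hw : 0 ≤ᵐ[ν] w)
    (hw_int : Integrable w ν) (hwG : Integrable (fun s => w s * G s) ν)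
    (hwG2 : Integrable (fun s => w s * G s ^ 2) ν) :
    (∫ s, w s * G s ∂ν) ^ 2 ≤ (∫ s, w s ∂ν) * ∫ s, w s * G s ^ 2 ∂ν := by
  have hquad : ∀ x : ℝ, 0 ≤ (∫ s, w s ∂ν) * (x * x) + (-2 * ∫ s, w s * G s ∂ν) * x
      + ∫ s, w s * G s ^ 2 ∂ν := by
    intro x
    have hexpand : ∫ s, w s * (G s - x) ^ 2 ∂ν = ∫ s, w s * G s ^ 2 ∂ν
        - 2 * x * ∫ s, w s * G s ∂ν + x * x * ∫ s, w s ∂ν := by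
      have hpt : ∀ s, w s * (G s - x) ^ 2
          = w s * G s ^ 2 - 2 * x * (w s * G s) + x * x * w s := fun s => by ring
      simp_rw [hpt]
      rw [integral_add _ (hw_int.const_mul _), integral_sub hwG2 (hwG.const_mul _),
        integral_const_mul, integral_const_mul]
      exact hwG2.sub (hwG.const_mul _)
    have hnonneg : 0 ≤ ∫ s, w s * (G s - x) ^ 2 ∂ν :=
      integral_nonneg_of_ae (hw.mono fun s hs => mul_nonneg hs (sq_nonneg _))
    linarith
  have := discrim_le_zero hquad
  rw [discrim] at this
  linarith

variable [IsFiniteMeasure μ] [IsFiniteMeasure ν] {K : α → β → ℝ} {G : β → ℝ} {a b C : ℝ}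

theorem integrable_sq_integral_kernel_mul (hK : Measurable (Function.uncurry K))
    (hKC : ∀ t s, |K t s| ≤ C) (hG : MemLp G 2 ν) :
    Integrable (fun t => (∫ s, K t s * G s ∂ν) ^ 2) μ := by
  have hmeas : AEStronglyMeasurable (fun t => ∫ s, K t s * G s ∂ν) μ :=
    AEStronglyMeasurable.integral_prod_right'
      (f := fun p : α × β => K p.1 p.2 * G p.2)
      (hK.aestronglyMeasurable.mul hG.1.comp_snd)
  refine Integrable.of_bound (hmeas.pow 2) ((C * ∫ s, |G s| ∂ν) ^ 2)
    (Filter.Eventually.of_forall fun t => ?_)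
  rw [Real.norm_eq_abs, abs_pow]
  gcongr
  calc |∫ s, K t s * G s ∂ν| ≤ ∫ s, |K t s * G s| ∂ν := abs_integral_le_integral_abs
    _ ≤ ∫ s, C * |G s| ∂ν := by
        refine integral_mono_of_nonneg (Filter.Eventually.of_forall fun s => abs_nonneg _)
          ((hG.integrable one_le_two).abs.const_mul C) (Filter.Eventually.of_forall fun s => ?_)
        dsimp only
        rw [abs_mul]
        exact mul_le_mul_of_nonneg_right (hKC t s) (abs_nonneg _)
    _ = C * ∫ s, |G s| ∂ν := integral_const_mul _ _

theorem integral_sq_integral_kernel_mul_le (hK : Measurable (Function.uncurry K))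
    (hK0 : ∀ t s, 0 ≤ K t s) (hKC : ∀ t s, K t s ≤ C) (ha : 0 ≤ a)
    (hrow : ∀ t, ∫ s, K t s ∂ν ≤ a) (hcol : ∀ s, ∫ t, K t s ∂μ ≤ b) (hG : MemLp G 2 ν) :
    ∫ t, (∫ s, K t s * G s ∂ν) ^ 2 ∂μ ≤ a * b * ∫ s, G s ^ 2 ∂ν := by
  have hG1 : Integrable G ν := hG.integrable one_le_two
  have hG2 : Integrable (fun s => G s ^ 2) ν := hG.integrable_sq
  have hKabs : ∀ t s, ‖K t s‖ ≤ C := fun t s => by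
    rw [Real.norm_eq_abs, abs_of_nonneg (hK0 t s)]
    exact hKC t s
  have hKt : ∀ t, AEStronglyMeasurable (K t) ν := fun t =>
    (hK.comp measurable_prodMk_left).aestronglyMeasurable
  have hF : Integrable (Function.uncurry fun t s => K t s * G s ^ 2) (μ.prod ν) := by
    refine Integrable.mono' ((integrable_const C).mul_prod hG2)
      (hK.aestronglyMeasurable.mul hG2.1.comp_snd) (Filter.Eventually.of_forall fun p => ?_)
    rw [Function.uncurry_apply_pair, norm_mul, Real.norm_of_nonneg (sq_nonneg (G p.2))]
    exact mul_le_mul_of_nonneg_right (hKabs p.1 p.2) (sq_nonneg _)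
  have hpointwise : ∀ t, (∫ s, K t s * G s ∂ν) ^ 2 ≤ a * ∫ s, K t s * G s ^ 2 ∂ν := fun t =>
    (sq_integral_mul_le_integral_mul_integral_mul_sq
      (Filter.Eventually.of_forall (hK0 t)) (Integrable.of_bound (hKt t) C
        (Filter.Eventually.of_forall (hKabs t)))
      (hG1.bdd_mul (hKt t) (Filter.Eventually.of_forall (hKabs t)))
      (hG2.bdd_mul (hKt t) (Filter.Eventually.of_forall (hKabs t)))).trans
    (mul_le_mul_of_nonneg_right (hrow t)
      (integral_nonneg fun s => mul_nonneg (hK0 t s) (sq_nonneg _)))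
  calc ∫ t, (∫ s, K t s * G s ∂ν) ^ 2 ∂μ
      ≤ ∫ t, a * ∫ s, K t s * G s ^ 2 ∂ν ∂μ :=
        integral_mono_of_nonneg (Filter.Eventually.of_forall fun t => sq_nonneg _)
          (hF.integral_prod_left.const_mul a) (Filter.Eventually.of_forall hpointwise)
    _ = a * ∫ s, ∫ t, K t s * G s ^ 2 ∂μ ∂ν := by
        rw [integral_const_mul, integral_integral_swap hF]
    _ ≤ a * ∫ s, b * G s ^ 2 ∂ν := by
        refine mul_le_mul_of_nonneg_left (integral_mono hF.integral_prod_right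
          (hG2.const_mul b) fun s => ?_) ha
        rw [integral_mul_const]
        exact mul_le_mul_of_nonneg_right (hcol s) (sq_nonneg _)
    _ = a * b * ∫ s, G s ^ 2 ∂ν := by
        rw [integral_const_mul, mul_assoc]

end SchurTest

theorem MeasureTheory.IntegrableOn.continuous_clm_apply {E F : Type*} [NormedAddCommGroup E]
    [NormedSpace ℝ E] [NormedAddCommGroup F] [NormedSpace ℝ F] {L : ℝ → E →L[ℝ] F}
    (hL : Continuous L) {g : ℝ → E} {a b : ℝ} (hg : IntegrableOn g (Ioc a b)) :
    IntegrableOn (fun s => L s (g s)) (Ioc a b) := by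
  obtain ⟨C, hC⟩ := isCompact_Icc.exists_bound_of_continuousOn hL.continuousOn (s := Icc a b)
  exact (ContinuousLinearMap.id ℝ (E →L[ℝ] F)).integrable_of_bilin_of_bdd_left C
    hL.aestronglyMeasurable
    (ae_restrict_of_forall_mem measurableSet_Ioc fun s hs => hC s (Ioc_subset_Icc_self hs)) hg

-- `c t = ∫ s in Ioc t T, backwardExpKernel l t s * G s` solves `c' = l c - G`, `c T = 0`.
noncomputable def backwardExpKernel (l t s : ℝ) : ℝ := if t < s then Real.exp (l * (t - s)) else 0

namespace backwardExpKernel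

variable {l : ℝ}

theorem measurable_uncurry (l : ℝ) : Measurable (Function.uncurry (backwardExpKernel l)) :=
  Measurable.ite (measurableSet_lt measurable_fst measurable_snd) (by fun_prop) measurable_const

theorem nonneg (l t s : ℝ) : 0 ≤ backwardExpKernel l t s := by
  unfold backwardExpKernel
  split_ifs <;> positivity

theorem le_one (hl : 0 ≤ l) (t s : ℝ) : backwardExpKernel l t s ≤ 1 := by
  unfold backwardExpKernel
  split_ifs with h
  · exact Real.exp_le_one_iff.mpr (mul_nonpos_of_nonneg_of_nonpos hl (by linarith))
  · exact zero_le_one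

theorem eq_indicator_Ioi (l t s : ℝ) :
    backwardExpKernel l t s = (Ioi t).indicator (fun s => Real.exp (l * (t - s))) s := by
  simp [backwardExpKernel, indicator_apply]

theorem eq_indicator_Iio (l t s : ℝ) :
    backwardExpKernel l t s = (Iio s).indicator (fun t => Real.exp (l * (t - s))) t := by
  simp [backwardExpKernel, indicator_apply]

theorem integral_left (hl : 0 < l) (t : ℝ) : ∫ s, backwardExpKernel l t s = l⁻¹ := by
  have hsplit : ∀ s, Real.exp (l * (t - s)) = Real.exp (l * t) * Real.exp (-l * s) := fun s => by
    rw [← Real.exp_add]; ring_nf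
  simp_rw [eq_indicator_Ioi]
  rw [integral_indicator measurableSet_Ioi]
  simp_rw [hsplit]
  rw [integral_const_mul, integral_exp_mul_Ioi (neg_lt_zero.mpr hl), neg_div_neg_eq,
    ← mul_div_assoc, ← Real.exp_add]
  simp

theorem integral_right (hl : 0 < l) (s : ℝ) : ∫ t, backwardExpKernel l t s = l⁻¹ := by
  have hsplit : ∀ t, Real.exp (l * (t - s)) = Real.exp (-l * s) * Real.exp (l * t) := fun t => by
    rw [← Real.exp_add]; ring_nf
  simp_rw [eq_indicator_Iio]
  rw [integral_indicator measurableSet_Iio, ← integral_Iic_eq_integral_Iio]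
  simp_rw [hsplit]
  rw [integral_const_mul, integral_exp_mul_Iic hl, ← mul_div_assoc, ← Real.exp_add]
  simp

theorem integrable_left (hl : 0 < l) (t : ℝ) : Integrable (backwardExpKernel l t) := by
  refine Integrable.of_integral_ne_zero ?_
  rw [integral_left hl t]
  exact inv_ne_zero hl.ne'

theorem integrable_right (hl : 0 < l) (s : ℝ) : Integrable fun t => backwardExpKernel l t s := by
  refine Integrable.of_integral_ne_zero ?_
  rw [integral_right hl s]
  exact inv_ne_zero hl.ne'

theorem integrable_sq_integral_mul (hl : 0 ≤ l) {S : Set ℝ}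
    [IsFiniteMeasure (volume.restrict S)] {G : ℝ → ℝ} (hG : MemLp G 2 (volume.restrict S)) :
    Integrable (fun t => (∫ s in S, backwardExpKernel l t s * G s) ^ 2) (volume.restrict S) :=
  integrable_sq_integral_kernel_mul (measurable_uncurry l)
    (fun t s => (abs_of_nonneg (nonneg l t s)).trans_le (le_one hl t s)) hG

theorem mul_integral_sq_integral_mul_le (hl : 0 < l) {S : Set ℝ}
    [IsFiniteMeasure (volume.restrict S)] {G : ℝ → ℝ} (hG : MemLp G 2 (volume.restrict S)) :
    l * ∫ t in S, (∫ s in S, backwardExpKernel l t s * G s) ^ 2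
      ≤ l⁻¹ * ∫ t in S, G t ^ 2 := by
  have hrow : ∀ t, ∫ s in S, backwardExpKernel l t s ≤ l⁻¹ := fun t =>
    (setIntegral_le_integral (integrable_left hl t)
      (Filter.Eventually.of_forall (nonneg l t))).trans_eq (integral_left hl t)
  have hcol : ∀ s, ∫ t in S, backwardExpKernel l t s ≤ l⁻¹ := fun s =>
    (setIntegral_le_integral (integrable_right hl s)
      (Filter.Eventually.of_forall fun t => nonneg l t s)).trans_eq (integral_right hl s)
  have := integral_sq_integral_kernel_mul_le (measurable_uncurry l) (nonneg l) (le_one hl.le)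
    (inv_nonneg.mpr hl.le) hrow hcol hG
  calc l * ∫ t in S, (∫ s in S, backwardExpKernel l t s * G s) ^ 2
      ≤ l * (l⁻¹ * l⁻¹ * ∫ t in S, G t ^ 2) := mul_le_mul_of_nonneg_left this hl.le
    _ = l⁻¹ * ∫ t in S, G t ^ 2 := by field_simp

end backwardExpKernel

theorem exp_apply_of_apply_eq_smul {E : Type*} [NormedAddCommGroup E] [NormedSpace ℝ E]
    [CompleteSpace E] {M : E →L[ℝ] E} {x : E} {a : ℝ} (h : M x = a • x) :
    NormedSpace.exp M x = Real.exp a • x := by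
  have hpow : ∀ n : ℕ, (M ^ n) x = a ^ n • x := by
    intro n
    induction n with
    | zero => simp
    | succ n ih =>
      rw [pow_succ', mul_apply_eq_comp, ih, map_smul, h, smul_smul, pow_succ]
  have hM := (NormedSpace.exp_series_hasSum_exp' (𝕂 := ℝ) M).mapL (ContinuousLinearMap.apply ℝ E x)
  have ha := (NormedSpace.exp_series_hasSum_exp' (𝕂 := ℝ) a).smul_const x
  rw [← Real.exp_eq_exp_ℝ] at ha
  refine hM.unique (ha.congr_fun fun n => ?_)
  simp [hpow, smul_smul]

section Spectral

variable {V : Type*} [NormedAddCommGroup V] [InnerProductSpace ℝ V]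

theorem LinearMap.IsSymmetric.inner_apply_of_apply_eq_smul {M : V →ₗ[ℝ] V}
    (hM : M.IsSymmetric) {e : V} {a : ℝ} (he : M e = a • e) (v : V) :
    inner ℝ e (M v) = a * inner ℝ e v := by
  rw [← hM, he, real_inner_smul_left]

theorem inner_inverse_apply_of_apply_eq_smul {B Binv : V →L[ℝ] V}
    (hB : (B : V →ₗ[ℝ] V).IsSymmetric) (hBinv : B.comp Binv = ContinuousLinearMap.id ℝ V)
    {e : V} {a : ℝ} (ha : a ≠ 0) (he : B e = a • e) (v : V) :
    inner ℝ e (Binv v) = a⁻¹ * inner ℝ e v := by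
  have := hB.inner_apply_of_apply_eq_smul he (Binv v)
  rw [ContinuousLinearMap.coe_coe, ← ContinuousLinearMap.comp_apply, hBinv,
    ContinuousLinearMap.id_apply] at this
  rw [this, inv_mul_cancel_left₀ ha]

theorem eigenvalue_ne_zero_of_comp_eq_id {B Binv : V →L[ℝ] V}
    (hBinv : Binv.comp B = ContinuousLinearMap.id ℝ V) {e : V} (he0 : e ≠ 0) {a : ℝ}
    (he : B e = a • e) : a ≠ 0 := by
  rintro rfl
  apply he0
  rw [← ContinuousLinearMap.id_apply (R₁ := ℝ) e, ← hBinv, ContinuousLinearMap.comp_apply, he,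
    zero_smul, map_zero]

theorem apply_eq_neg_sq_smul_of_comp_eq_neg {A B : V →L[ℝ] V} (hBB : B.comp B = -A) {e : V}
    {a : ℝ} (he : B e = a • e) : A e = (-(a ^ 2)) • e := by
  rw [← neg_neg A, ← hBB, neg_apply, ContinuousLinearMap.comp_apply, he, map_smul, he, smul_smul,
    neg_smul, sq]

theorem norm_sq_eq_sum_of_inner_apply {ι : Type*} [Fintype ι] (b : OrthonormalBasis ι ℝ V)
    {M : V → V} {m : ι → ℝ} (hM : ∀ i v, inner ℝ (b i) (M v) = m i * inner ℝ (b i) v) (v : V) :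
    ‖M v‖ ^ 2 = ∑ i, m i ^ 2 * inner ℝ (b i) v ^ 2 := by
  simp_rw [← b.sum_sq_inner_right, hM, mul_pow]

theorem integral_norm_sq_eq_sum_of_inner_apply {α ι : Type*} [MeasurableSpace α]
    {ν : Measure α} [Fintype ι] (b : OrthonormalBasis ι ℝ V) {M : V → V} {m : ι → ℝ}
    (hM : ∀ i v, inner ℝ (b i) (M v) = m i * inner ℝ (b i) v) {F : α → V}
    (hF : ∀ i, Integrable (fun t => inner ℝ (b i) (F t) ^ 2) ν) :
    ∫ t, ‖M (F t)‖ ^ 2 ∂ν = ∑ i, m i ^ 2 * ∫ t, inner ℝ (b i) (F t) ^ 2 ∂ν := by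
  simp_rw [norm_sq_eq_sum_of_inner_apply b hM]
  rw [integral_finsetSum _ fun i _ => (hF i).const_mul _]
  simp_rw [integral_const_mul]

variable [CompleteSpace V]

theorem IsSelfAdjoint.inner_exp_smul_apply {A : V →L[ℝ] V} (hA : IsSelfAdjoint A) {e : V}
    {a : ℝ} (he : A e = a • e) (r : ℝ) (v : V) :
    inner ℝ e (NormedSpace.exp (r • A) v) = Real.exp (r * a) * inner ℝ e v :=
  ((IsSelfAdjoint.all r).smul hA).exp.isSymmetric.inner_apply_of_apply_eq_smul
    (exp_apply_of_apply_eq_smul (by rw [smul_apply, he, smul_smul])) v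

theorem IsSelfAdjoint.inner_integral_exp_apply_eq_integral_backwardExpKernel
    {A : V →L[ℝ] V} (hA : IsSelfAdjoint A) {e : V} {l : ℝ} (he : A e = (-l) • e) {T t : ℝ}
    (ht : t ∈ Ioc 0 T) {g : ℝ → V} (hg : IntegrableOn g (Ioc 0 T)) :
    inner ℝ e (∫ s in t..T, NormedSpace.exp ((s - t) • A) (g s))
      = ∫ s in Ioc 0 T, backwardExpKernel l t s * inner ℝ e (g s) := by
  have hint : IntegrableOn (fun s => NormedSpace.exp ((s - t) • A) (g s)) (Ioc t T) :=
    (hg.mono_set (Ioc_subset_Ioc_left ht.1.le)).continuous_clm_apply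
      ((continuous_iff_continuousAt.2 fun u => (hasDerivAt_exp_smul_const A u).continuousAt).comp
        (continuous_id.sub continuous_const))
  rw [intervalIntegral.integral_of_le ht.2, ← integral_inner hint]
  have hK : ∀ s, backwardExpKernel l t s * inner ℝ e (g s)
      = (Ioi t).indicator (fun s => Real.exp (l * (t - s)) * inner ℝ e (g s)) s := fun s => by
    rw [backwardExpKernel.eq_indicator_Ioi, indicator_mul_left]
  simp_rw [hK, setIntegral_indicator measurableSet_Ioi, Ioc_inter_Ioi, max_eq_right ht.1.le,
    hA.inner_exp_smul_apply he]
  congr with s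
  ring_nf

end Spectral

theorem stmt7_general
    {V : Type*} [NormedAddCommGroup V] [InnerProductSpace ℝ V] [FiniteDimensional ℝ V]
    (A : V →L[ℝ] V)
    (hAsym : ∀ x y : V, (inner ℝ (A x) y : ℝ) = inner ℝ x (A y))
    (B Binv : V →L[ℝ] V)
    (hBsym : ∀ x y : V, (inner ℝ (B x) y : ℝ) = inner ℝ x (B y))
    (hBB : B.comp B = -A)
    (hBinv : Binv.comp B = ContinuousLinearMap.id ℝ V ∧
             B.comp Binv = ContinuousLinearMap.id ℝ V)
    (T : ℝ) (hT : 0 < T)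
    (g : ℝ → V) (hg : MemLp g 2 (volume.restrict (Set.Ioc 0 T)))
    (y : ℝ → V)
    (hy : ∀ t, y t = ∫ s in t..T, (NormedSpace.exp ((s - t) • A)) (g s)) :
    Real.sqrt (∫ t in (0:ℝ)..T, ‖B (y t)‖ ^ 2)
      ≤ Real.sqrt (∫ t in (0:ℝ)..T, ‖Binv (g t)‖ ^ 2) := by
  have hB : (B : V →ₗ[ℝ] V).IsSymmetric := hBsym
  have hA : IsSelfAdjoint A := ContinuousLinearMap.isSelfAdjoint_iff_isSymmetric.mpr hAsym
  let b := hB.eigenvectorBasis rfl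
  let μ := hB.eigenvalues rfl
  have hBb : ∀ i, B (b i) = μ i • b i := hB.apply_eigenvectorBasis rfl
  have hμ : ∀ i, μ i ≠ 0 := fun i =>
    eigenvalue_ne_zero_of_comp_eq_id hBinv.1 (b.orthonormal.ne_zero i) (hBb i)
  have hyc : ∀ i, (fun t => inner ℝ (b i) (y t) ^ 2) =ᵐ[volume.restrict (Ioc 0 T)]
      fun t => (∫ s in Ioc 0 T, backwardExpKernel (μ i ^ 2) t s * inner ℝ (b i) (g s)) ^ 2 :=
    fun i => by
      filter_upwards [ae_restrict_mem measurableSet_Ioc] with t ht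
      rw [hy t, hA.inner_integral_exp_apply_eq_integral_backwardExpKernel
        (apply_eq_neg_sq_smul_of_comp_eq_neg hBB (hBb i)) ht
        (hg.integrable one_le_two)]
  have hcomp : ∀ i, MemLp (fun s => inner ℝ (b i) (g s)) 2 (volume.restrict (Ioc 0 T)) :=
    fun i => hg.const_inner (b i)
  rw [intervalIntegral.integral_of_le hT.le, intervalIntegral.integral_of_le hT.le,
    integral_norm_sq_eq_sum_of_inner_apply b (M := B)
      (fun i => hB.inner_apply_of_apply_eq_smul (hBb i))
      fun i => (backwardExpKernel.integrable_sq_integral_mul (sq_nonneg _) (hcomp i)).congr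
        (hyc i).symm,
    integral_norm_sq_eq_sum_of_inner_apply b (M := Binv)
      (fun i => inner_inverse_apply_of_apply_eq_smul hB hBinv.2 (hμ i) (hBb i))
      fun i => (hcomp i).integrable_sq]
  refine Real.sqrt_le_sqrt (Finset.sum_le_sum fun i _ => ?_)
  rw [integral_congr_ae (hyc i), inv_pow]
  exact backwardExpKernel.mul_integral_sq_integral_mul_le (sq_pos_of_ne_zero (hμ i)) (hcomp i)

/-- for a negative definite self-adjoint operator `A` on a
finite-dimensional inner product space `V` (with positive square root `B` of `-A`,
with inverse `Binv`), the solution `y(t) = ∫_t^T e^{(s-t)A} g(s) ds` of the backward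
equation satisfies `(∫₀^T ‖(-A)^{1/2} y‖²)^{1/2} ≤ (∫₀^T ‖(-A)^{-1/2} g‖²)^{1/2}`. -/
theorem stmt7
    {V : Type*} [NormedAddCommGroup V] [InnerProductSpace ℝ V] [FiniteDimensional ℝ V]
    (A : V →L[ℝ] V)
    (hAsym : ∀ x y : V, (inner ℝ (A x) y : ℝ) = inner ℝ x (A y))
    (hAneg : ∀ x : V, x ≠ 0 → (inner ℝ (A x) x : ℝ) < 0)
    (B Binv : V →L[ℝ] V)
    (hBsym : ∀ x y : V, (inner ℝ (B x) y : ℝ) = inner ℝ x (B y))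
    (hBpos : ∀ x : V, x ≠ 0 → 0 < (inner ℝ (B x) x : ℝ))
    (hBB : B.comp B = -A)
    (hBinv : Binv.comp B = ContinuousLinearMap.id ℝ V ∧
             B.comp Binv = ContinuousLinearMap.id ℝ V)
    (T : ℝ) (hT : 0 < T)
    (g : ℝ → V) (hg : MemLp g 2 (volume.restrict (Set.Ioc 0 T)))
    (y : ℝ → V)
    (hy : ∀ t, y t = ∫ s in t..T, (NormedSpace.exp ((s - t) • A)) (g s)) :
    Real.sqrt (∫ t in (0:ℝ)..T, ‖B (y t)‖ ^ 2)
      ≤ Real.sqrt (∫ t in (0:ℝ)..T, ‖Binv (g t)‖ ^ 2) :=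
  stmt7_general A hAsym B Binv hBsym hBB hBinv T hT g hg y hy
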